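/- arXiv:2207.10946 — 4 statements merged into one kernel-verified Lean document; each statement's English description precedes it below -/
import Mathlib

section
/- Let Ω = B₁(0) ⊂ ℝ² be the open unit disc and define f : Ω → ℝ by f(x) = |x|. Then f ∈ H¹(Ω), its symmetric-decreasing rearrangement is f*(x) = √(1 − |x|²), and ∫_Ω |∇f*|² dx = +∞; in particular f* ∉ H¹(Ω), so the Pólya–Szegő inequality fails for general H¹ functions (without zero boundary trace). -/
/-!
The superlevel set `{t < ‖y‖}` of the norm in the unit disc is an annulus of area `π (1 - t²)`,
so its Schwarz symmetrization is the disc of radius `√(1 - t²)`, which contains `x` exactly when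
`t < √(1 - ‖x‖²)`; the layer-cake integral over `t` is therefore `√(1 - ‖x‖²)`. In polar
coordinates the energy `∫ ‖x‖² / (1 - ‖x‖²)` over the unit ball becomes
`∫₀¹ r^(d-1) r² / (1 - r²) dr`, whose integrand is of order `1 / (1 - r)` at `r = 1`.
-/

open MeasureTheory Metric

/-- Radius of the centered ball with the same volume as `A`. -/
noncomputable def ballRad (n : ℕ) (A : Set (EuclideanSpace ℝ (Fin n))) : ℝ :=
  ((volume A) / (volume (ball (0 : EuclideanSpace ℝ (Fin n)) 1))).toReal ^ ((n : ℝ)⁻¹)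

/-- Symmetric rearrangement of a set: the centered open ball with the same volume. -/
noncomputable def schwarzSet (n : ℕ) (A : Set (EuclideanSpace ℝ (Fin n))) :
    Set (EuclideanSpace ℝ (Fin n)) := ball 0 (ballRad n A)

/-- Radially symmetric-decreasing (Schwarz) rearrangement of `f` on `Ω`,
defined by the layer-cake formula `f*(x) = ∫₀^∞ 𝟙_{{f>t}*}(x) dt`. -/
noncomputable def schwarz (n : ℕ) (Ω : Set (EuclideanSpace ℝ (Fin n)))
    (f : EuclideanSpace ℝ (Fin n) → ℝ) (x : EuclideanSpace ℝ (Fin n)) : ℝ :=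
  ∫ t in Set.Ioi (0 : ℝ),
    (schwarzSet n {y ∈ Ω | t < f y}).indicator (fun _ => (1 : ℝ)) x

open Set

theorem not_integrableOn_one_sub_inv {a : ℝ} (ha : a < 1) :
    ¬ IntegrableOn (fun y : ℝ => (1 - y)⁻¹) (Ioo a 1) := by
  intro h
  have : IntervalIntegrable (fun y : ℝ => (y - 1)⁻¹) volume a 1 := by
    rw [intervalIntegrable_iff_integrableOn_Ioo_of_le ha.le]
    simpa only [← neg_sub (1 : ℝ), inv_neg, Pi.neg_def] using h.neg
  simp [intervalIntegrable_sub_inv_iff, ha.ne, ha.le] at this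

theorem not_integrableOn_pow_mul_sq_div_one_sub_sq (k : ℕ) :
    ¬ IntegrableOn (fun y : ℝ => y ^ k * (y ^ 2 / (1 - y ^ 2))) (Ioo 0 1) := by
  intro h
  refine not_integrableOn_one_sub_inv (a := 1 / 2) (by norm_num) <|
    ((h.mono_set (Ioo_subset_Ioo_left (by norm_num))).const_mul (2 ^ (k + 3))).mono'
      (by fun_prop : Measurable _).aestronglyMeasurable ?_
  filter_upwards [ae_restrict_mem measurableSet_Ioo] with y ⟨hy₀, hy₁⟩
  have hpow : (1 / 2 : ℝ) ^ (k + 2) ≤ y ^ (k + 2) := pow_le_pow_left₀ (by norm_num) hy₀.le _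
  rw [Real.norm_of_nonneg (inv_nonneg.mpr (by linarith))]
  calc (1 - y)⁻¹ = 2 ^ (k + 3) * ((1 / 2) ^ (k + 2) / (2 * (1 - y))) := by
        rw [pow_succ, mul_assoc, mul_div_assoc', mul_div_mul_left _ _ two_ne_zero, ← mul_div_assoc,
          ← mul_pow]
        norm_num
    _ ≤ 2 ^ (k + 3) * (y ^ (k + 2) / (1 - y ^ 2)) := by
        gcongr
        · nlinarith
        · nlinarith
    _ = 2 ^ (k + 3) * (y ^ k * (y ^ 2 / (1 - y ^ 2))) := by ring

section AddHaar

variable {E : Type*} [NormedAddCommGroup E] [NormedSpace ℝ E] [MeasurableSpace E] [BorelSpace E]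
  [FiniteDimensional ℝ E] (μ : Measure E) [μ.IsAddHaarMeasure]

theorem addHaar_ball_one_diff_closedBall {t : ℝ} (ht₀ : 0 ≤ t) (ht₁ : t < 1) :
    μ (ball 0 1 \ closedBall 0 t) =
      ENNReal.ofReal (1 - t ^ Module.finrank ℝ E) * μ (ball 0 1) := by
  rw [measure_sdiff (closedBall_subset_ball ht₁) measurableSet_closedBall.nullMeasurableSet
      measure_closedBall_lt_top.ne, Measure.addHaar_closedBall _ _ ht₀,
    ENNReal.ofReal_sub _ (by positivity), ENNReal.ofReal_one,
    ENNReal.sub_mul fun _ _ => measure_ball_lt_top.ne, one_mul]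

variable [Nontrivial E]

theorem not_integrableOn_ball_sq_div_one_sub_sq :
    ¬ IntegrableOn (fun x : E => ‖x‖ ^ 2 / (1 - ‖x‖ ^ 2)) (ball 0 1) μ := by
  rw [integrableOn_fun_norm_addHaar μ (f := fun r => r ^ 2 / (1 - r ^ 2))]
  simpa only [smul_eq_mul] using not_integrableOn_pow_mul_sq_div_one_sub_sq _

theorem lintegral_ball_sq_div_one_sub_sq_eq_top :
    ∫⁻ x in ball (0 : E) 1, ENNReal.ofReal (‖x‖ ^ 2 / (1 - ‖x‖ ^ 2)) ∂μ = ⊤ := by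
  by_contra h
  refine not_integrableOn_ball_sq_div_one_sub_sq μ <|
    (lintegral_ofReal_ne_top_iff_integrable (by fun_prop : Measurable _).aestronglyMeasurable
      ?_).mp h
  filter_upwards [ae_restrict_mem measurableSet_ball] with x hx
  have : ‖x‖ ^ 2 < 1 := by simpa using mem_ball_zero_iff.mp hx
  exact div_nonneg (sq_nonneg _) (by linarith)

end AddHaar

theorem ballRad_eq_of_volume_eq {n : ℕ} (hn : n ≠ 0) {A : Set (EuclideanSpace ℝ (Fin n))} {r : ℝ}
    (hr : 0 ≤ r) (hA : volume A = volume (ball (0 : EuclideanSpace ℝ (Fin n)) r)) :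
    ballRad n A = r := by
  have : Nontrivial (EuclideanSpace ℝ (Fin n)) :=
    Module.nontrivial_of_finrank_pos (R := ℝ) (by simpa using Nat.pos_of_ne_zero hn)
  rw [ballRad, hA, Measure.addHaar_ball _ _ hr, finrank_euclideanSpace_fin, mul_div_assoc,
    ENNReal.div_self (measure_ball_pos _ _ one_pos).ne' measure_ball_lt_top.ne, mul_one,
    ENNReal.toReal_ofReal (by positivity), Real.pow_rpow_inv_natCast hr hn]

theorem schwarz_eq_of_mem_schwarzSet_iff {n : ℕ} {Ω : Set (EuclideanSpace ℝ (Fin n))}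
    {f : EuclideanSpace ℝ (Fin n) → ℝ} {x : EuclideanSpace ℝ (Fin n)} {s : ℝ} (hs : 0 ≤ s)
    (h : ∀ t > 0, x ∈ schwarzSet n {y ∈ Ω | t < f y} ↔ t < s) :
    schwarz n Ω f x = s := by
  calc schwarz n Ω f x = ∫ t in Ioi 0, (Iio s).indicator 1 t :=
        setIntegral_congr_fun measurableSet_Ioi fun t ht => by
          by_cases hts : t < s
          · rw [indicator_of_mem ((h t ht).mpr hts), indicator_of_mem (mem_Iio.mpr hts)]; rfl
          · rw [indicator_of_notMem (mt (h t ht).mp hts), indicator_of_notMem (mt mem_Iio.mp hts)]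
    _ = s := by
        rw [integral_indicator_one measurableSet_Iio, Measure.real,
          Measure.restrict_apply measurableSet_Iio, Iio_inter_Ioi, Real.volume_Ioo, sub_zero,
          ENNReal.toReal_ofReal hs]

local notation "E²" => EuclideanSpace ℝ (Fin 2)

theorem volume_superlevel_norm {t : ℝ} (ht : 0 ≤ t) :
    volume {y ∈ ball (0 : E²) 1 | t < ‖y‖} = volume (ball (0 : E²) √(1 - t ^ 2)) := by
  have hset : {y ∈ ball (0 : E²) 1 | t < ‖y‖} = ball 0 1 \ closedBall 0 t := by
    ext y; simp
  rw [hset]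
  rcases lt_or_ge t 1 with ht₁ | ht₁
  · rw [addHaar_ball_one_diff_closedBall _ ht ht₁, Measure.addHaar_ball _ _ (Real.sqrt_nonneg _),
      finrank_euclideanSpace_fin, Real.sq_sqrt (by nlinarith)]
  -- for `t ≥ 1` both sets are empty, `√` sending negative numbers to `0`
  · rw [sdiff_eq_empty.mpr (ball_subset_closedBall.trans (closedBall_subset_closedBall ht₁)),
      Real.sqrt_eq_zero'.mpr (by nlinarith), ball_zero]

theorem schwarz_ball_one_norm {x : E²} :
    schwarz 2 (ball 0 1) (fun y => ‖y‖) x = √(1 - ‖x‖ ^ 2) := by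
  refine schwarz_eq_of_mem_schwarzSet_iff (Real.sqrt_nonneg _) fun t ht => ?_
  rw [schwarzSet, ballRad_eq_of_volume_eq two_ne_zero (Real.sqrt_nonneg _)
      (volume_superlevel_norm ht.le), mem_ball_zero_iff, Real.lt_sqrt (norm_nonneg x),
    Real.lt_sqrt ht.le]
  constructor <;> intro <;> linarith

/-- On the unit disc `Ω = B₁(0) ⊂ ℝ²`, the function `f(x) = |x|` is in `H¹(Ω)`
(it is 1-Lipschitz), its symmetric-decreasing rearrangement is `f*(x) = √(1 − |x|²)`,
and the Dirichlet energy of `f*`, whose integrand is `|∇f*(x)|² = |x|²/(1−|x|²)`, is infinite;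
in particular `f* ∉ H¹(Ω)`, so the Pólya–Szegő inequality fails without zero boundary trace. -/
theorem faber_krahn_stmt1 :
    LipschitzWith 1 (fun x : EuclideanSpace ℝ (Fin 2) => ‖x‖) ∧
    (∀ x ∈ ball (0 : EuclideanSpace ℝ (Fin 2)) 1,
      schwarz 2 (ball (0 : EuclideanSpace ℝ (Fin 2)) 1) (fun y => ‖y‖) x
        = Real.sqrt (1 - ‖x‖ ^ 2)) ∧
    (∫⁻ x in ball (0 : EuclideanSpace ℝ (Fin 2)) 1,
        ENNReal.ofReal (‖x‖ ^ 2 / (1 - ‖x‖ ^ 2)) = ⊤) ∧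
    ¬ IntegrableOn (fun x : EuclideanSpace ℝ (Fin 2) => ‖x‖ ^ 2 / (1 - ‖x‖ ^ 2))
        (ball (0 : EuclideanSpace ℝ (Fin 2)) 1) volume :=
  ⟨lipschitzWith_one_norm, fun _ _ => schwarz_ball_one_norm,
    lintegral_ball_sq_div_one_sub_sq_eq_top volume, not_integrableOn_ball_sq_div_one_sub_sq volume⟩
end

section
/- Let ψ : [0,1] → ℝ be C², with ψ(0) = ψ(1) = 0, ψ > 0 on (0,1). Suppose η : [0,∞) → [1/2, 1) is differentiable, nondecreasing, solves η'(t) = √(2ψ(η(t))) for all t ≥ 0, and satisfies η(t) → 1 as t → ∞. Then ψ'(1) = 0. -/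
open Filter Set Topology

/-
If `ψ'(1) = -c < 0`, then near `1` we have `2ψ(s) ≥ c (1 - s)`, so `u = 1 - η` satisfies
`u' = -√(2ψ(η)) ≤ -√c · √u` once `η` is close to `1`. Hence `√u` decreases at least at the
constant rate `√c / 2` and must reach `0` in finite time, contradicting `η < 1`. The inequality
`ψ'(1) ≤ 0` holds because `ψ` is positive to the left of its zero at `1`.
-/

section OneSided

variable {f : ℝ → ℝ} {f' a : ℝ}

theorem HasDerivWithinAt.nonpos_of_eventually_le_left (hf : HasDerivWithinAt f f' (Iio a) a)
    (hmin : ∀ᶠ x in 𝓝[<] a, f a ≤ f x) : f' ≤ 0 := by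
  refine le_of_tendsto ((hasDerivWithinAt_iff_tendsto_slope' self_notMem_Iio).1 hf) ?_
  filter_upwards [hmin, self_mem_nhdsWithin] with x hx hxa
  rw [slope_def_field]
  exact div_nonpos_of_nonneg_of_nonpos (sub_nonneg.2 hx) (sub_nonpos.2 (le_of_lt hxa))

theorem HasDerivWithinAt.eventually_sub_mul_lt_left (hf : HasDerivWithinAt f f' (Iio a) a)
    {r : ℝ} (hr : f' < r) : ∀ᶠ x in 𝓝[<] a, f a - r * (a - x) < f x := by
  filter_upwards [hf.limsup_slope_le' self_notMem_Iio hr, self_mem_nhdsWithin] with x hx hxa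
  rw [slope_def_field, div_lt_iff_of_neg (sub_neg.2 hxa)] at hx
  linarith

end OneSided

section SqrtDecay

variable {u u' : ℝ → ℝ} {k t₀ : ℝ}

theorem antitoneOn_sqrt_add_mul_of_deriv_le_neg_mul_sqrt
    (hu : ∀ t ≥ t₀, HasDerivAt u (u' t) t) (hpos : ∀ t ≥ t₀, 0 < u t)
    (hle : ∀ t ≥ t₀, u' t ≤ -k * √(u t)) :
    AntitoneOn (fun t => √(u t) + k / 2 * t) (Ici t₀) := by
  have hderiv : ∀ t ≥ t₀, HasDerivAt (fun t => √(u t) + k / 2 * t)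
      (u' t / (2 * √(u t)) + k / 2) t := fun t ht => by
    simpa using ((hu t ht).sqrt (hpos t ht).ne').fun_add ((hasDerivAt_id t).const_mul (k / 2))
  refine antitoneOn_of_hasDerivWithinAt_nonpos (convex_Ici t₀)
    (fun t ht => (hderiv t ht).continuousAt.continuousWithinAt)
    (fun t ht => (hderiv t (le_of_lt (interior_Ici.subset ht))).hasDerivWithinAt)
    (fun t ht => ?_)
  have ht : t₀ ≤ t := le_of_lt (interior_Ici.subset ht)
  have hsqrt : 0 < √(u t) := Real.sqrt_pos.2 (hpos t ht)
  rw [div_add' _ _ _ (by positivity), div_nonpos_iff]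
  exact Or.inr ⟨by nlinarith [hle t ht], by positivity⟩

theorem exists_nonpos_of_deriv_le_neg_mul_sqrt (hk : 0 < k)
    (hu : ∀ t ≥ t₀, HasDerivAt u (u' t) t) (hle : ∀ t ≥ t₀, u' t ≤ -k * √(u t)) :
    ∃ t ≥ t₀, u t ≤ 0 := by
  by_contra! hpos
  have hanti := antitoneOn_sqrt_add_mul_of_deriv_le_neg_mul_sqrt hu hpos hle
  -- By time `T` the linear term alone exceeds the initial value `√(u t₀)`.
  set T := t₀ + 2 * (√(u t₀) + 1) / k
  have hT : t₀ ≤ T := le_add_of_nonneg_right (by positivity)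
  have hdecay : √(u T) + k / 2 * T ≤ √(u t₀) + k / 2 * t₀ :=
    hanti self_mem_Ici (mem_Ici.2 hT) hT
  have hgain : k / 2 * (T - t₀) = √(u t₀) + 1 := by
    simp only [T]; field_simp; ring
  nlinarith [Real.sqrt_nonneg (u T)]

end SqrtDecay

theorem faber_krahn_stmt2_general (ψ η : ℝ → ℝ)
    (hψC2 : ContDiffOn ℝ 2 ψ (Set.Icc 0 1)) (hψ1 : ψ 1 = 0)
    (hψpos : ∀ s ∈ Set.Ioo (0 : ℝ) 1, 0 < ψ s)
    (hrange : ∀ t ≥ (0 : ℝ), η t ∈ Set.Ico (1 / 2 : ℝ) 1)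
    (hODE : ∀ t ≥ (0 : ℝ), HasDerivAt η (Real.sqrt (2 * ψ (η t))) t)
    (hlim : Filter.Tendsto η Filter.atTop (nhds 1)) :
    derivWithin ψ (Set.Icc 0 1) 1 = 0 := by
  set d := derivWithin ψ (Icc 0 1) 1
  have hder : HasDerivWithinAt ψ d (Iio 1) 1 :=
    ((hψC2.differentiableOn (by norm_num)) 1 (by norm_num)).hasDerivWithinAt.mono_of_mem_nhdsWithin
      (mem_of_superset (Ioo_mem_nhdsLT zero_lt_one) Ioo_subset_Icc_self)
  refine le_antisymm (hder.nonpos_of_eventually_le_left ?_) (not_lt.1 fun hd => ?_)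
  · exact eventually_of_mem (Ioo_mem_nhdsLT zero_lt_one) fun s hs => hψ1 ▸ (hψpos s hs).le
  have hη_left : Tendsto η atTop (𝓝[<] 1) :=
    tendsto_nhdsWithin_iff.2 ⟨hlim, eventually_atTop.2 ⟨0, fun t ht => (hrange t ht).2⟩⟩
  obtain ⟨t₀, ht₀⟩ := eventually_atTop.1 <|
    (hη_left.eventually (hder.eventually_sub_mul_lt_left (by linarith : d < d / 2))).and
      (eventually_ge_atTop 0)
  have hdecay : ∀ t ≥ t₀, -√(2 * ψ (η t)) ≤ -√(-d) * √(1 - η t) := by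
    intro t ht
    have hlower : -d * (1 - η t) ≤ 2 * ψ (η t) := by linarith [(ht₀ t ht).1]
    rw [neg_mul, neg_le_neg_iff, ← Real.sqrt_mul (neg_nonneg.2 hd.le)]
    exact Real.sqrt_le_sqrt hlower
  obtain ⟨t, ht, hηt⟩ := exists_nonpos_of_deriv_le_neg_mul_sqrt (Real.sqrt_pos.2 (neg_pos.2 hd))
    (fun t ht => (hODE t (ht₀ t ht).2).const_sub 1) hdecay
  linarith [(hrange t (ht₀ t ht).2).2]

/-- If `ψ ∈ C²([0,1])` with `ψ(0)=ψ(1)=0`, `ψ>0` on `(0,1)`, and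
`η : [0,∞) → [1/2,1)` is a nondecreasing solution of `η' = √(2ψ(η))` with `η(t) → 1`
as `t → ∞`, then `ψ'(1) = 0`. -/
theorem faber_krahn_stmt2 (ψ η : ℝ → ℝ)
    (hψC2 : ContDiffOn ℝ 2 ψ (Set.Icc 0 1)) (hψ0 : ψ 0 = 0) (hψ1 : ψ 1 = 0)
    (hψpos : ∀ s ∈ Set.Ioo (0 : ℝ) 1, 0 < ψ s)
    (hrange : ∀ t ≥ (0 : ℝ), η t ∈ Set.Ico (1 / 2 : ℝ) 1)
    (hODE : ∀ t ≥ (0 : ℝ), HasDerivAt η (Real.sqrt (2 * ψ (η t))) t)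
    (hmono : MonotoneOn η (Set.Ici 0))
    (hlim : Filter.Tendsto η Filter.atTop (nhds 1)) :
    derivWithin ψ (Set.Icc 0 1) 1 = 0 :=
  faber_krahn_stmt2_general ψ η hψC2 hψ1 hψpos hrange hODE hlim
end

section
/- (Rearrangement decreases the penalized eigenvalue quadratic form.) Let Ω = B_R(0) ⊂ ℝⁿ, b : [0,1] → [0, β] continuous and strictly decreasing with b(0) = β, let φ : Ω → [0,1] be measurable and w : Ω → [0,∞) be in L²(Ω). Then ∫_Ω b(φ*)·(w*)² dx ≤ ∫_Ω b(φ)·w² dx, where * denotes symmetric-decreasing rearrangement on Ω. -/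
open MeasureTheory Metric

/-!
Write `b = β - B` with `B` nondecreasing, continuous and `B 0 = 0`, so that
`∫ b(φ*)(w*)² = β ∫ (w*)² - ∫ B(φ*)(w*)²`. Equimeasurability gives `∫ (w*)² = ∫ w²`, and the
Hardy–Littlewood inequality gives `∫ B(φ) w² ≤ ∫ B(φ*)(w*)²`. For the latter, the double
layer-cake formula `∫ F G = ∫∫ |{F > s} ∩ {G > t}| ds dt` reduces it to superlevel sets; those
of `B(φ)` are superlevel sets of `φ`, and off the origin the superlevel sets of a Schwarz
rearrangement are centred balls of the same measure. Centred balls are nested, hence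
`|{φ > a} ∩ {w > c}| ≤ min (|{φ > a}|, |{w > c}|) = |{φ* > a} ∩ {w* > c}|`.
-/

open Set Filter

section LayerCake

variable {α α' : Type*} [MeasurableSpace α] [MeasurableSpace α']

theorem lintegral_ofReal_eq_of_measure_lt_eq {μ : Measure α} {ν : Measure α'}
    {f : α → ℝ} {g : α' → ℝ} (hf : 0 ≤ f) (hg : 0 ≤ g) (hfm : Measurable f) (hgm : Measurable g)
    (h : ∀ t > 0, μ {x | t < f x} = ν {x | t < g x}) :
    ∫⁻ x, ENNReal.ofReal (f x) ∂μ = ∫⁻ x, ENNReal.ofReal (g x) ∂ν := by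
  rw [lintegral_eq_lintegral_meas_lt μ (ae_of_all _ hf) hfm.aemeasurable,
    lintegral_eq_lintegral_meas_lt ν (ae_of_all _ hg) hgm.aemeasurable]
  exact setLIntegral_congr_fun measurableSet_Ioi h

theorem lintegral_ofReal_mul_eq_lintegral_measure_inter (μ : Measure α) {f g : α → ℝ}
    (hf : 0 ≤ f) (hg : 0 ≤ g) (hfm : Measurable f) (hgm : Measurable g) :
    ∫⁻ x, ENNReal.ofReal (f x * g x) ∂μ
      = ∫⁻ s in Ioi 0, ∫⁻ t in Ioi 0, μ ({x | s < f x} ∩ {x | t < g x}) := by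
  calc ∫⁻ x, ENNReal.ofReal (f x * g x) ∂μ
      = ∫⁻ x, ENNReal.ofReal (f x) ∂μ.withDensity fun x => ENNReal.ofReal (g x) := by
        rw [lintegral_withDensity_eq_lintegral_mul _ hgm.ennreal_ofReal hfm.ennreal_ofReal]
        congr with x
        rw [ENNReal.ofReal_mul (hf x), Pi.mul_apply, mul_comm]
    _ = ∫⁻ s in Ioi 0, μ.withDensity (fun x => ENNReal.ofReal (g x)) {x | s < f x} :=
        lintegral_eq_lintegral_meas_lt _ (ae_of_all _ hf) hfm.aemeasurable
    _ = ∫⁻ s in Ioi 0, ∫⁻ t in Ioi 0, μ ({x | s < f x} ∩ {x | t < g x}) := by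
        congr with s
        rw [withDensity_apply _ (measurableSet_lt measurable_const hfm),
          lintegral_eq_lintegral_meas_lt _ (ae_of_all _ hg) hgm.aemeasurable]
        congr with t
        rw [Measure.restrict_apply (measurableSet_lt measurable_const hgm), inter_comm]

theorem lintegral_ofReal_mul_le_of_measure_inter_le {μ : Measure α} {ν : Measure α'}
    {f g : α → ℝ} {f' g' : α' → ℝ} (hf : 0 ≤ f) (hg : 0 ≤ g) (hf' : 0 ≤ f') (hg' : 0 ≤ g')
    (hfm : Measurable f) (hgm : Measurable g) (hf'm : Measurable f') (hg'm : Measurable g')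
    (h : ∀ s > 0, ∀ t > 0,
      μ ({x | s < f x} ∩ {x | t < g x}) ≤ ν ({x | s < f' x} ∩ {x | t < g' x})) :
    ∫⁻ x, ENNReal.ofReal (f x * g x) ∂μ ≤ ∫⁻ x, ENNReal.ofReal (f' x * g' x) ∂ν := by
  rw [lintegral_ofReal_mul_eq_lintegral_measure_inter μ hf hg hfm hgm,
    lintegral_ofReal_mul_eq_lintegral_measure_inter ν hf' hg' hf'm hg'm]
  exact setLIntegral_mono' measurableSet_Ioi fun s hs =>
    setLIntegral_mono' measurableSet_Ioi fun t ht => h s hs t ht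

theorem integral_le_integral_of_lintegral_ofReal_le {μ : Measure α} {ν : Measure α'}
    {f : α → ℝ} {g : α' → ℝ} (hf : 0 ≤ f) (hg : 0 ≤ g) (hfi : Integrable f μ)
    (hgi : Integrable g ν)
    (h : ∫⁻ x, ENNReal.ofReal (f x) ∂μ ≤ ∫⁻ x, ENNReal.ofReal (g x) ∂ν) :
    ∫ x, f x ∂μ ≤ ∫ x, g x ∂ν := by
  rwa [← ENNReal.ofReal_le_ofReal_iff (integral_nonneg hg),
    ofReal_integral_eq_lintegral_ofReal hfi (ae_of_all _ hf),
    ofReal_integral_eq_lintegral_ofReal hgi (ae_of_all _ hg)]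

theorem integral_sub_mul_le_of_lintegral_le {μ : Measure α} {β : ℝ} {F F' G G' : α → ℝ}
    (hβ : 0 ≤ β) (hF : 0 ≤ F) (hF' : 0 ≤ F') (hF'm : Measurable F') (hGm : Measurable G)
    (hG'm : Measurable G') (hG : ∀ x, G x ∈ Icc 0 β) (hG' : ∀ x, G' x ∈ Icc 0 β)
    (hFi : Integrable F μ)
    (hmass : ∫⁻ x, ENNReal.ofReal (F' x) ∂μ ≤ ∫⁻ x, ENNReal.ofReal (F x) ∂μ)
    (hHL : ∫⁻ x, ENNReal.ofReal (G x * F x) ∂μ ≤ ∫⁻ x, ENNReal.ofReal (G' x * F' x) ∂μ) :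
    ∫ x, (β - G' x) * F' x ∂μ ≤ ∫ x, (β - G x) * F x ∂μ := by
  have hF'i : Integrable F' μ := by
    refine ⟨hF'm.aestronglyMeasurable, (hasFiniteIntegral_iff_ofReal (ae_of_all _ hF')).2 ?_⟩
    exact hmass.trans_lt ((hasFiniteIntegral_iff_ofReal (ae_of_all _ hF)).1 hFi.2)
  have hmul : ∀ {H K : α → ℝ}, Measurable H → (∀ x, H x ∈ Icc 0 β) → Integrable K μ →
      Integrable (fun x => H x * K x) μ := fun hHm hH hK =>
    hK.bdd_mul hHm.aestronglyMeasurable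
      (ae_of_all _ fun x => (Real.norm_of_nonneg (hH x).1).trans_le (hH x).2)
  have hmul_nonneg : ∀ {H K : α → ℝ}, (∀ x, H x ∈ Icc 0 β) → 0 ≤ K →
      0 ≤ fun x => H x * K x := fun hH hK x => mul_nonneg (hH x).1 (hK x)
  have hexpand : ∀ {H K : α → ℝ}, Measurable H → (∀ x, H x ∈ Icc 0 β) → Integrable K μ →
      ∫ x, (β - H x) * K x ∂μ = β * ∫ x, K x ∂μ - ∫ x, H x * K x ∂μ := fun hHm hH hK => by
    simp_rw [sub_mul]
    rw [integral_sub (hK.const_mul β) (hmul hHm hH hK), integral_const_mul]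
  rw [hexpand hG'm hG' hF'i, hexpand hGm hG hFi]
  exact sub_le_sub
    (mul_le_mul_of_nonneg_left
      (integral_le_integral_of_lintegral_ofReal_le hF' hF hF'i hFi hmass) hβ)
    (integral_le_integral_of_lintegral_ofReal_le (hmul_nonneg hG hF) (hmul_nonneg hG' hF')
      (hmul hGm hG hFi) (hmul hG'm hG' hF'i) hHL)

end LayerCake

theorem exists_lt_iff_lt_of_monotoneOn {B : ℝ → ℝ} {p q s : ℝ} (hpq : p ≤ q)
    (hB : MonotoneOn B (Icc p q)) (hBc : ContinuousOn B (Icc p q)) (hs : B p ≤ s) :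
    ∃ a ∈ Icc p q, ∀ u ∈ Icc p q, s < B u ↔ a < u := by
  set T := Icc p q ∩ B ⁻¹' Iic s
  have hbdd : BddAbove T := ⟨q, fun u hu => hu.1.2⟩
  have haT : sSup T ∈ T :=
    (hBc.preimage_isClosed_of_isClosed isClosed_Icc isClosed_Iic).csSup_mem
      ⟨p, left_mem_Icc.2 hpq, hs⟩ hbdd
  refine ⟨sSup T, haT.1, fun u hu => ⟨fun h => ?_, fun h => ?_⟩⟩
  · by_contra! hle
    exact h.not_ge ((hB hu haT.1 hle).trans haT.2)
  · by_contra! hle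
    exact h.not_ge (le_csSup hbdd ⟨hu, hle⟩)

theorem ContinuousOn.measurable_comp {β γ : Type*} [TopologicalSpace β] [MeasurableSpace β]
    [OpensMeasurableSpace β] [TopologicalSpace γ] [MeasurableSpace γ] [BorelSpace γ]
    {α : Type*} [MeasurableSpace α] {b : β → γ} {s : Set β} {φ : α → β}
    (hb : ContinuousOn b s) (hφ : Measurable φ) (hφs : ∀ x, φ x ∈ s) :
    Measurable fun x => b (φ x) :=
  hb.domRestrict.measurable.comp (hφ.subtype_mk (h := hφs))

theorem setOf_lt_sq_eq {α : Type*} {v : α → ℝ} (hv : 0 ≤ v) {t : ℝ} (ht : 0 ≤ t) :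
    {x | t < v x ^ 2} = {x | √t < v x} := by
  ext x
  exact (Real.sqrt_lt ht (hv x)).symm

section Rearrangement

variable {n : ℕ}

theorem volume_ball_zero_eq [NeZero n] {r : ℝ} (hr : 0 ≤ r) :
    volume (ball (0 : EuclideanSpace ℝ (Fin n)) r)
      = ENNReal.ofReal (r ^ n) * volume (ball (0 : EuclideanSpace ℝ (Fin n)) 1) := by
  simpa [finrank_euclideanSpace_fin] using
    Measure.addHaar_ball (volume : Measure (EuclideanSpace ℝ (Fin n))) 0 hr

theorem ballRad_pow [NeZero n] (A : Set (EuclideanSpace ℝ (Fin n))) :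
    ballRad n A ^ n = (volume A / volume (ball (0 : EuclideanSpace ℝ (Fin n)) 1)).toReal := by
  rw [ballRad, ← Real.rpow_natCast, ← Real.rpow_mul ENNReal.toReal_nonneg,
    inv_mul_cancel₀ (Nat.cast_ne_zero.2 (NeZero.ne n)), Real.rpow_one]

theorem ballRad_nonneg (A : Set (EuclideanSpace ℝ (Fin n))) : 0 ≤ ballRad n A :=
  Real.rpow_nonneg ENNReal.toReal_nonneg _

theorem volume_ball_ballRad [NeZero n] {A : Set (EuclideanSpace ℝ (Fin n))} (hA : volume A ≠ ⊤) :
    volume (ball (0 : EuclideanSpace ℝ (Fin n)) (ballRad n A)) = volume A := by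
  have h1 : volume (ball (0 : EuclideanSpace ℝ (Fin n)) 1) ≠ 0 := (measure_ball_pos _ _ one_pos).ne'
  rw [volume_ball_zero_eq (ballRad_nonneg A), ballRad_pow,
    ENNReal.ofReal_toReal (ENNReal.div_lt_top hA h1).ne,
    ENNReal.div_mul_cancel h1 measure_ball_lt_top.ne]

theorem ballRad_mono {A B : Set (EuclideanSpace ℝ (Fin n))} (hB : volume B ≠ ⊤)
    (h : volume A ≤ volume B) : ballRad n A ≤ ballRad n B := by
  have h1 : volume (ball (0 : EuclideanSpace ℝ (Fin n)) 1) ≠ 0 := (measure_ball_pos _ _ one_pos).ne'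
  exact Real.rpow_le_rpow ENNReal.toReal_nonneg
    (ENNReal.toReal_mono (ENNReal.div_lt_top hB h1).ne (ENNReal.div_le_div_right h _))
    (by positivity)

theorem ballRad_ball [NeZero n] {R : ℝ} (hR : 0 ≤ R) :
    ballRad n (ball (0 : EuclideanSpace ℝ (Fin n)) R) = R := by
  have h1 : volume (ball (0 : EuclideanSpace ℝ (Fin n)) 1) ≠ 0 := (measure_ball_pos _ _ one_pos).ne'
  refine (pow_left_inj₀ (ballRad_nonneg _) hR (NeZero.ne n)).1 ?_
  rw [ballRad_pow, volume_ball_zero_eq hR, ENNReal.mul_div_cancel_right h1 measure_ball_lt_top.ne,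
    ENNReal.toReal_ofReal (by positivity)]

theorem ballRad_le_of_subset_ball [NeZero n] {A : Set (EuclideanSpace ℝ (Fin n))} {R : ℝ}
    (hR : 0 ≤ R) (hA : A ⊆ ball 0 R) : ballRad n A ≤ R :=
  ballRad_ball (n := n) hR ▸ ballRad_mono measure_ball_lt_top.ne (measure_mono hA)

theorem ballRad_empty [NeZero n] : ballRad n (∅ : Set (EuclideanSpace ℝ (Fin n))) = 0 := by
  simp [ballRad, Real.zero_rpow (inv_ne_zero (Nat.cast_ne_zero.2 (NeZero.ne n)))]

noncomputable def levelRad (n : ℕ) (Ω : Set (EuclideanSpace ℝ (Fin n)))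
    (f : EuclideanSpace ℝ (Fin n) → ℝ) (t : ℝ) : ℝ :=
  ballRad n {y ∈ Ω | t < f y}

variable {Ω : Set (EuclideanSpace ℝ (Fin n))} {f : EuclideanSpace ℝ (Fin n) → ℝ}

theorem levelRad_antitone (hΩ : volume Ω ≠ ⊤) : Antitone (levelRad n Ω f) := fun _ _ hst =>
  ballRad_mono (ne_top_of_le_ne_top hΩ (measure_mono (sep_subset _ _)))
    (measure_mono fun _ hy => ⟨hy.1, hst.trans_lt hy.2⟩)

theorem volume_ball_levelRad [NeZero n] (hΩ : volume Ω ≠ ⊤) (t : ℝ) :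
    volume (ball (0 : EuclideanSpace ℝ (Fin n)) (levelRad n Ω f t)) = volume {y ∈ Ω | t < f y} :=
  volume_ball_ballRad (ne_top_of_le_ne_top hΩ (measure_mono (sep_subset _ _)))

theorem schwarz_eq_toReal (hΩ : volume Ω ≠ ⊤) (x : EuclideanSpace ℝ (Fin n)) :
    schwarz n Ω f x = (volume ({t | ‖x‖ < levelRad n Ω f t} ∩ Ioi 0)).toReal := by
  have hind : (fun t => (schwarzSet n {y ∈ Ω | t < f y}).indicator (fun _ => (1 : ℝ)) x)
      = {t | ‖x‖ < levelRad n Ω f t}.indicator 1 := by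
    ext t
    simp only [indicator, schwarzSet, levelRad, mem_ball_zero_iff, mem_ofPred_eq,
      Pi.one_apply]
    congr
  rw [schwarz, hind, integral_indicator_one
      (measurableSet_lt measurable_const (levelRad_antitone hΩ).measurable),
    Measure.real, Measure.restrict_apply' measurableSet_Ioi]

theorem schwarz_nonneg (x : EuclideanSpace ℝ (Fin n)) : 0 ≤ schwarz n Ω f x :=
  integral_nonneg fun _ => indicator_nonneg (fun _ _ => zero_le_one) _

theorem measurable_schwarz (hΩ : volume Ω ≠ ⊤) : Measurable (schwarz n Ω f) := by
  have hanti : Antitone fun ρ : ℝ => volume ({t | ρ < levelRad n Ω f t} ∩ Ioi 0) :=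
    fun _ _ h => measure_mono (inter_subset_inter_left _ fun _ ht => h.trans_lt ht)
  rw [funext (schwarz_eq_toReal hΩ)]
  exact (hanti.measurable.comp measurable_norm).ennreal_toReal

theorem schwarz_mem_Icc [NeZero n] (hΩ : volume Ω ≠ ⊤) {M : ℝ} (hM : 0 ≤ M)
    (hf : ∀ y ∈ Ω, f y ≤ M) (x : EuclideanSpace ℝ (Fin n)) : schwarz n Ω f x ∈ Icc 0 M := by
  refine ⟨schwarz_nonneg x, ?_⟩
  have hsub : {t | ‖x‖ < levelRad n Ω f t} ∩ Ioi 0 ⊆ Ioc 0 M := by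
    refine fun t ⟨ht, ht0⟩ => ⟨ht0, not_lt.1 fun hMt => ?_⟩
    have hempty : {y ∈ Ω | t < f y} = ∅ :=
      eq_empty_of_forall_notMem fun y hy => (hf y hy.1).not_gt (hMt.trans hy.2)
    rw [mem_ofPred_eq, levelRad, hempty, ballRad_empty] at ht
    exact (norm_nonneg x).not_gt ht
  rw [schwarz_eq_toReal hΩ]
  exact ENNReal.toReal_le_of_le_ofReal hM
    ((measure_mono hsub).trans (by rw [Real.volume_Ioc, sub_zero]))

theorem eventually_levelRad_lt [NeZero n] (hΩm : MeasurableSet Ω) (hΩ : volume Ω ≠ ⊤)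
    (hf : Measurable f) {ρ : ℝ} (hρ : 0 < ρ) : ∀ᶠ t in atTop, levelRad n Ω f t < ρ := by
  have hvol : Tendsto (fun t => volume {y ∈ Ω | t < f y}) atTop (nhds 0) := by
    have h := tendsto_measure_iInter_atTop (μ := volume) (s := fun t : ℝ => {y ∈ Ω | t < f y})
      (fun t => (hΩm.inter (measurableSet_lt measurable_const hf)).nullMeasurableSet)
      (fun _ _ hst _ hy => ⟨hy.1, hst.trans_lt hy.2⟩) ⟨0, ne_top_of_le_ne_top hΩ
        (measure_mono (sep_subset _ _))⟩
    rwa [iInter_eq_empty_iff.2 fun y => ⟨f y, fun hy => lt_irrefl _ hy.2⟩, measure_empty] at h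
  filter_upwards [hvol.eventually
    (gt_mem_nhds (measure_ball_pos volume (0 : EuclideanSpace ℝ (Fin n)) hρ))] with t ht
  by_contra! hle
  rw [← volume_ball_levelRad hΩ] at ht
  exact (measure_mono (ball_subset_ball hle)).not_gt ht

theorem volume_levelRad_inter_Ioi_ne_top [NeZero n] (hΩm : MeasurableSet Ω)
    (hΩ : volume Ω ≠ ⊤) (hf : Measurable f) {x : EuclideanSpace ℝ (Fin n)} (hx : x ≠ 0) :
    volume ({t | ‖x‖ < levelRad n Ω f t} ∩ Ioi 0) ≠ ⊤ := by
  obtain ⟨T, hT⟩ := (eventually_levelRad_lt hΩm hΩ hf (norm_pos_iff.2 hx)).exists_forall_of_atTop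
  have hsub : {t | ‖x‖ < levelRad n Ω f t} ∩ Ioi 0 ⊆ Ioo 0 T :=
    fun t ⟨ht, ht0⟩ => ⟨ht0, not_le.1 fun hTt => (hT t hTt).not_gt ht⟩
  exact ne_top_of_le_ne_top (by simp) (measure_mono hsub)

theorem lt_schwarz_iff [NeZero n] (hΩm : MeasurableSet Ω) (hΩ : volume Ω ≠ ⊤)
    (hf : Measurable f) {x : EuclideanSpace ℝ (Fin n)} (hx : x ≠ 0) {s : ℝ} (hs : 0 ≤ s) :
    s < schwarz n Ω f x ↔ ∃ t > s, ‖x‖ < levelRad n Ω f t := by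
  have hfin := volume_levelRad_inter_Ioi_ne_top hΩm hΩ hf hx
  rw [schwarz_eq_toReal hΩ]
  constructor
  · intro hlt
    by_contra! hle
    have hsub : {t | ‖x‖ < levelRad n Ω f t} ∩ Ioi 0 ⊆ Ioc 0 s :=
      fun t ⟨ht, ht0⟩ => ⟨ht0, not_lt.1 fun hst => (hle t hst).not_gt ht⟩
    exact hlt.not_ge (ENNReal.toReal_le_of_le_ofReal hs
      ((measure_mono hsub).trans (by rw [Real.volume_Ioc, sub_zero])))
  · rintro ⟨t, hst, ht⟩
    have hsub : Ioc 0 t ⊆ {t | ‖x‖ < levelRad n Ω f t} ∩ Ioi 0 :=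
      fun u hu => ⟨ht.trans_le (levelRad_antitone hΩ hu.2), hu.1⟩
    refine hst.trans_le ((ENNReal.ofReal_le_iff_le_toReal hfin).1 ?_)
    simpa [Real.volume_Ioc] using measure_mono (μ := volume) hsub

/-- Off the origin, this is the superlevel set `{x | s < schwarz n Ω f x}`. -/
def levelBall (n : ℕ) (Ω : Set (EuclideanSpace ℝ (Fin n))) (f : EuclideanSpace ℝ (Fin n) → ℝ)
    (s : ℝ) : Set (EuclideanSpace ℝ (Fin n)) :=
  ⋃ t ∈ Ioi s, ball 0 (levelRad n Ω f t)

theorem schwarz_superlevel_ae_eq [NeZero n] (hΩm : MeasurableSet Ω) (hΩ : volume Ω ≠ ⊤)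
    (hf : Measurable f) {s : ℝ} (hs : 0 ≤ s) :
    {x | s < schwarz n Ω f x} =ᵐ[volume] levelBall n Ω f s := by
  have h0 : volume ({0} : Set (EuclideanSpace ℝ (Fin n))) = 0 := measure_singleton 0
  have hdiff : {x | s < schwarz n Ω f x} \ {0} = levelBall n Ω f s \ {0} := by
    ext x
    simp only [levelBall, Set.mem_sdiff, mem_singleton_iff, mem_iUnion, mem_ball_zero_iff, mem_Ioi,
      mem_ofPred_eq, exists_prop]
    exact and_congr_left (lt_schwarz_iff hΩm hΩ hf · hs)
  exact (sdiff_null_ae_eq_self h0).symm.trans (hdiff ▸ sdiff_null_ae_eq_self h0)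

theorem volume_levelBall [NeZero n] (hΩ : volume Ω ≠ ⊤) (s : ℝ) :
    volume (levelBall n Ω f s) = volume {y ∈ Ω | s < f y} := by
  have hlev : {y ∈ Ω | s < f y} = ⋃ t : Ioi s, {y ∈ Ω | (t : ℝ) < f y} := by
    ext y
    simp only [mem_iUnion, mem_ofPred_eq, Subtype.exists, mem_Ioi, exists_prop]
    constructor
    · rintro ⟨hy, hsy⟩
      obtain ⟨t, hst, hty⟩ := exists_between hsy
      exact ⟨t, hst, hy, hty⟩
    · rintro ⟨t, hst, hy, hty⟩
      exact ⟨hy, hst.trans hty⟩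
  have hballs : Antitone fun t : Ioi s => ball (0 : EuclideanSpace ℝ (Fin n)) (levelRad n Ω f t) :=
    fun _ _ h => ball_subset_ball (levelRad_antitone hΩ h)
  have hsets : Antitone fun t : Ioi s => {y ∈ Ω | (t : ℝ) < f y} :=
    fun _ _ h _ hy => ⟨hy.1, (Subtype.coe_le_coe.2 h).trans_lt hy.2⟩
  rw [levelBall, biUnion_eq_iUnion, hlev, hballs.measure_iUnion, hsets.measure_iUnion]
  simp_rw [volume_ball_levelRad hΩ]

theorem levelBall_subset_or_subset {Ω' : Set (EuclideanSpace ℝ (Fin n))}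
    {g : EuclideanSpace ℝ (Fin n) → ℝ} (s s' : ℝ) :
    levelBall n Ω f s ⊆ levelBall n Ω' g s' ∨ levelBall n Ω' g s' ⊆ levelBall n Ω f s := by
  have hclosed : ∀ {Ω : Set (EuclideanSpace ℝ (Fin n))} {f s x y}, x ∈ levelBall n Ω f s →
      ‖y‖ ≤ ‖x‖ → y ∈ levelBall n Ω f s := fun hx hyx => by
    simp only [levelBall, mem_iUnion, mem_ball_zero_iff] at hx ⊢
    obtain ⟨t, ht, hxt⟩ := hx
    exact ⟨t, ht, hyx.trans_lt hxt⟩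
  by_contra! h
  obtain ⟨⟨x, hx, hx'⟩, ⟨y, hy, hy'⟩⟩ := And.imp not_subset.1 not_subset.1 h
  rcases le_total ‖x‖ ‖y‖ with hxy | hyx
  · exact hx' (hclosed hy hxy)
  · exact hy' (hclosed hx hyx)

/-- Rearranged superlevel sets are nested centred balls, so their intersection is as large as
possible. -/
theorem volume_inter_le_volume_schwarz_inter [NeZero n] (hΩm : MeasurableSet Ω)
    (hΩ : volume Ω ≠ ⊤) {g : EuclideanSpace ℝ (Fin n) → ℝ} (hf : Measurable f)
    (hg : Measurable g) {a c : ℝ} (ha : 0 ≤ a) (hc : 0 ≤ c) :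
    volume ({y ∈ Ω | a < f y} ∩ {y | c < g y})
      ≤ volume ({x | a < schwarz n Ω f x} ∩ {x | c < schwarz n Ω g x}) := by
  rw [measure_congr ((schwarz_superlevel_ae_eq hΩm hΩ hf ha).inter
    (schwarz_superlevel_ae_eq hΩm hΩ hg hc))]
  rcases levelBall_subset_or_subset (f := f) (g := g) (Ω := Ω) (Ω' := Ω) a c with h | h
  · rw [inter_eq_left.2 h, volume_levelBall hΩ]
    exact measure_mono inter_subset_left
  · rw [inter_eq_right.2 h, volume_levelBall hΩ]
    exact measure_mono fun y hy => ⟨hy.1.1, hy.2⟩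

theorem volume_schwarz_superlevel [NeZero n] (hΩm : MeasurableSet Ω) (hΩ : volume Ω ≠ ⊤)
    (hf : Measurable f) {s : ℝ} (hs : 0 ≤ s) :
    volume {x | s < schwarz n Ω f x} = volume {y ∈ Ω | s < f y} :=
  (measure_congr (schwarz_superlevel_ae_eq hΩm hΩ hf hs)).trans (volume_levelBall hΩ s)

theorem schwarz_superlevel_subset_ball [NeZero n] {R : ℝ} (hR : 0 ≤ R)
    (hΩ : Ω ⊆ ball 0 R) {s : ℝ} (hs : 0 ≤ s) : {x | s < schwarz n Ω f x} ⊆ ball 0 R := by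
  intro x hx
  by_contra hxR
  have hempty : {t | ‖x‖ < levelRad n Ω f t} ∩ Ioi 0 = ∅ :=
    eq_empty_of_forall_notMem fun t ht => (not_lt.1 (mt mem_ball_zero_iff.2 hxR)).not_gt
      (ht.1.trans_le (ballRad_le_of_subset_ball hR ((sep_subset _ _).trans hΩ)))
  rw [mem_ofPred_eq, schwarz_eq_toReal
    (ne_top_of_le_ne_top measure_ball_lt_top.ne (measure_mono hΩ)), hempty, measure_empty,
    ENNReal.toReal_zero] at hx
  exact hs.not_gt hx

end Rearrangement

section Ball

variable {n : ℕ} [NeZero n] {R : ℝ}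

theorem lintegral_sq_schwarz_ball (hR : 0 ≤ R) {w : EuclideanSpace ℝ (Fin n) → ℝ}
    (hw : Measurable w) (hw0 : 0 ≤ w) :
    ∫⁻ x in ball 0 R, ENNReal.ofReal (schwarz n (ball 0 R) w x ^ 2)
      = ∫⁻ x in ball 0 R, ENNReal.ofReal (w x ^ 2) := by
  have hΩ : volume (ball (0 : EuclideanSpace ℝ (Fin n)) R) ≠ ⊤ := measure_ball_lt_top.ne
  refine lintegral_ofReal_eq_of_measure_lt_eq (fun _ => sq_nonneg _) (fun _ => sq_nonneg _)
    ((measurable_schwarz hΩ).pow_const 2) (hw.pow_const 2) fun t ht => ?_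
  rw [setOf_lt_sq_eq schwarz_nonneg ht.le, setOf_lt_sq_eq hw0 ht.le,
    Measure.restrict_apply' measurableSet_ball, Measure.restrict_apply' measurableSet_ball,
    inter_eq_left.2 (schwarz_superlevel_subset_ball hR subset_rfl (Real.sqrt_nonneg t)),
    volume_schwarz_superlevel measurableSet_ball hΩ hw (Real.sqrt_nonneg t), inter_comm]
  rfl

theorem lintegral_comp_mul_sq_le_schwarz_ball (hR : 0 ≤ R) {B : ℝ → ℝ}
    (hBm : MonotoneOn B (Icc 0 1)) (hBc : ContinuousOn B (Icc 0 1)) (hB0 : B 0 = 0)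
    {φ w : EuclideanSpace ℝ (Fin n) → ℝ} (hφ : Measurable φ) (hφ01 : ∀ x, φ x ∈ Icc 0 1)
    (hw : Measurable w) (hw0 : 0 ≤ w) :
    ∫⁻ x in ball 0 R, ENNReal.ofReal (B (φ x) * w x ^ 2)
      ≤ ∫⁻ x in ball 0 R,
          ENNReal.ofReal (B (schwarz n (ball 0 R) φ x) * schwarz n (ball 0 R) w x ^ 2) := by
  have hΩ : volume (ball (0 : EuclideanSpace ℝ (Fin n)) R) ≠ ⊤ := measure_ball_lt_top.ne
  have hφ'01 : ∀ x, schwarz n (ball 0 R) φ x ∈ Icc 0 1 :=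
    schwarz_mem_Icc hΩ zero_le_one fun y _ => (hφ01 y).2
  have hB : ∀ u ∈ Icc (0 : ℝ) 1, 0 ≤ B u := fun u hu =>
    hB0 ▸ hBm (left_mem_Icc.2 zero_le_one) hu hu.1
  refine lintegral_ofReal_mul_le_of_measure_inter_le (fun x => hB _ (hφ01 x))
    (fun _ => sq_nonneg _) (fun x => hB _ (hφ'01 x)) (fun _ => sq_nonneg _)
    (hBc.measurable_comp hφ hφ01) (hw.pow_const 2)
    (hBc.measurable_comp (measurable_schwarz hΩ) hφ'01)
    ((measurable_schwarz hΩ).pow_const 2) fun s hs t ht => ?_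
  obtain ⟨a, ha, hlev⟩ := exists_lt_iff_lt_of_monotoneOn zero_le_one hBm hBc (hB0.trans_le hs.le)
  have hlevel : ∀ {ψ : EuclideanSpace ℝ (Fin n) → ℝ}, (∀ x, ψ x ∈ Icc 0 1) →
      {x | s < B (ψ x)} = {x | a < ψ x} := fun hψ => by
    ext x
    exact hlev _ (hψ x)
  rw [hlevel hφ01, hlevel hφ'01, setOf_lt_sq_eq hw0 ht.le, setOf_lt_sq_eq schwarz_nonneg ht.le,
    Measure.restrict_apply' measurableSet_ball, Measure.restrict_apply' measurableSet_ball,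
    inter_eq_left.2 (inter_subset_left.trans
      (schwarz_superlevel_subset_ball hR subset_rfl ha.1))]
  calc volume ({x | a < φ x} ∩ {x | √t < w x} ∩ ball 0 R)
      = volume ({y ∈ ball 0 R | a < φ y} ∩ {y | √t < w y}) := by
        congr 1
        ext y
        simp only [mem_inter_iff, mem_ofPred_eq]
        tauto
    _ ≤ _ := volume_inter_le_volume_schwarz_inter measurableSet_ball hΩ hφ hw ha.1
        (Real.sqrt_nonneg t)

end Ball

/-- In dimension `0`, `ballRad` is identically `1` (an `rpow` with exponent `(0 : ℝ)⁻¹ = 0`), so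
the layer-cake integral defining `schwarz` diverges and takes the junk value `0`. -/
theorem schwarz_dim_zero (Ω : Set (EuclideanSpace ℝ (Fin 0)))
    (f : EuclideanSpace ℝ (Fin 0) → ℝ) : schwarz 0 Ω f = 0 := by
  ext x
  have hone : ∀ t : ℝ, (schwarzSet 0 {y ∈ Ω | t < f y}).indicator (fun _ => (1 : ℝ)) x = 1 :=
    fun t => indicator_of_mem (by simp [schwarzSet, ballRad, Subsingleton.elim x 0]) _
  simp [schwarz, hone, Measure.real]

/-- rearrangement decreases the penalized quadratic form:
`∫_Ω b(φ*)(w*)² dx ≤ ∫_Ω b(φ) w² dx` for `b : [0,1] → [0,β]` continuous strictly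
decreasing with `b(0) = β`, `φ : Ω → [0,1]` measurable and `w ≥ 0` in `L²(Ω)`. -/
theorem faber_krahn_stmt9 (n : ℕ) (R β : ℝ) (hR : 0 < R) (hβ : 0 < β)
    (b : ℝ → ℝ) (hbc : ContinuousOn b (Set.Icc 0 1)) (hbanti : StrictAntiOn b (Set.Icc 0 1))
    (hb0 : b 0 = β) (hbrange : ∀ s ∈ Set.Icc (0 : ℝ) 1, b s ∈ Set.Icc 0 β)
    (φ w : EuclideanSpace ℝ (Fin n) → ℝ)
    (hφ : Measurable φ) (hφ01 : ∀ x, φ x ∈ Set.Icc (0 : ℝ) 1)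
    (hw : Measurable w) (hw0 : ∀ x, 0 ≤ w x)
    (hwL2 : IntegrableOn (fun x => w x ^ 2)
      (ball (0 : EuclideanSpace ℝ (Fin n)) R) volume) :
    ∫ x in ball (0 : EuclideanSpace ℝ (Fin n)) R,
        b (schwarz n (ball (0 : EuclideanSpace ℝ (Fin n)) R) φ x)
          * (schwarz n (ball (0 : EuclideanSpace ℝ (Fin n)) R) w x) ^ 2
      ≤ ∫ x in ball (0 : EuclideanSpace ℝ (Fin n)) R, b (φ x) * w x ^ 2 := by
  rcases eq_or_ne n 0 with rfl | hn
  · simpa [schwarz_dim_zero] using setIntegral_nonneg measurableSet_ball fun x _ =>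
      mul_nonneg (hbrange _ (hφ01 x)).1 (sq_nonneg (w x))
  have : NeZero n := ⟨hn⟩
  have hΩ : volume (ball (0 : EuclideanSpace ℝ (Fin n)) R) ≠ ⊤ := measure_ball_lt_top.ne
  have hφ'01 : ∀ x, schwarz n (ball 0 R) φ x ∈ Icc 0 1 :=
    schwarz_mem_Icc hΩ zero_le_one fun y _ => (hφ01 y).2
  have hBm : MonotoneOn (fun u => β - b u) (Icc 0 1) := fun u hu v hv huv =>
    sub_le_sub_left (hbanti.antitoneOn hu hv huv) β
  have hBrange : ∀ u ∈ Icc (0 : ℝ) 1, β - b u ∈ Icc 0 β := fun u hu =>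
    ⟨sub_nonneg.2 (hbrange u hu).2, sub_le_self β (hbrange u hu).1⟩
  have hmass := lintegral_sq_schwarz_ball hR.le hw hw0
  have hHL := lintegral_comp_mul_sq_le_schwarz_ball hR.le hBm (continuousOn_const.sub hbc)
    (sub_eq_zero.2 hb0.symm) hφ hφ01 hw hw0
  simpa only [Pi.sub_apply, sub_sub_cancel] using
    integral_sub_mul_le_of_lintegral_le (μ := volume.restrict (ball 0 R)) hβ.le
      (fun x => sq_nonneg (w x)) (fun _ => sq_nonneg _) ((measurable_schwarz hΩ).pow_const 2)
      (measurable_const.sub (hbc.measurable_comp hφ hφ01))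
      (measurable_const.sub (hbc.measurable_comp (measurable_schwarz hΩ) hφ'01))
      (fun x => hBrange _ (hφ01 x)) (fun x => hBrange _ (hφ'01 x)) hwL2 hmass.le hHL
end

section
/- (Radially symmetric-decreasing eigenfunction must be strictly decreasing.) Let Ω = B_R(0) ⊂ ℝⁿ, and let w ∈ H¹₀(Ω) ∩ H²(Ω) satisfy w > 0 everywhere in Ω, w radially symmetric and nonincreasing in |x|, and −Δw + V w = λ w a.e. in Ω, where λ ∈ ℝ and V : Ω → [0,∞) is radially nondecreasing (defined everywhere). If w is constant (= c > 0) on an annulus {s ≤ |x| ≤ t} with 0 ≤ s < t ≤ R, then w is constant (= c) on the whole annulus {s < |x| < R}, contradicting the zero boundary trace; hence w is strictly decreasing in |x|. -/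
/-!
Suppose `w x ≤ w y` with `‖x‖ < ‖y‖`. Then `w ≡ w x` on the shell `‖x‖ < ‖z‖ < ‖y‖`, so `Δw = 0`
there and the equation forces `V z₀ = λ` at some point `z₀` of that shell. Since `V` is radially
nondecreasing, `Δw = (V - λ) w ≥ 0` a.e., hence everywhere by continuity, on `‖z₀‖ < ‖z‖ < R`.
In place of the strong maximum principle we use the radial profile `g r = w (r • e)`: radial
monotonicity makes `t = 0` a maximum of `t ↦ w (r • e + t • v)` for every `v ⟂ e`, so all second
derivatives tangential to the sphere are `≤ 0` and `g'' ≥ Δw ≥ 0`. Thus `g` is convex on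
`[‖z₀‖, R]` and constant on `[‖z₀‖, ‖y‖]`, so `0 = g R ≥ g ‖y‖ = w x > 0`.
-/

open MeasureTheory Metric

open Filter Set Topology

section AlmostEverywhere

variable {α : Type*} [TopologicalSpace α] [MeasurableSpace α] [OpensMeasurableSpace α]
  {μ : Measure α} [μ.IsOpenPosMeasure] {s U : Set α}

lemma exists_mem_of_ae_restrict_of_isOpen {p : α → Prop} (h : ∀ᵐ x ∂μ.restrict s, p x)
    (hU : IsOpen U) (hne : U.Nonempty) (hUs : U ⊆ s) : ∃ x ∈ U, p x := by
  have : (ae (μ.restrict U)).NeBot :=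
    ae_neBot.2 (Measure.restrict_eq_zero.not.2 (hU.measure_ne_zero μ hne))
  exact ((ae_restrict_mem hU.measurableSet).and
    (ae_restrict_of_ae_restrict_of_subset hUs h)).exists

lemma ContinuousOn.nonneg_of_ae_restrict_nonneg {f : α → ℝ} (hf : ContinuousOn f U)
    (hU : IsOpen U) (h : ∀ᵐ x ∂μ.restrict U, 0 ≤ f x) : ∀ x ∈ U, 0 ≤ f x := by
  intro x hx
  by_contra! hneg
  obtain ⟨y, hy, hy0⟩ := exists_mem_of_ae_restrict_of_isOpen h
    (hf.isOpen_inter_preimage hU isOpen_Iio) ⟨x, hx, hneg⟩ inter_subset_left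
  exact hy0.not_gt hy.2

end AlmostEverywhere

lemma IsLocalMax.deriv_deriv_nonpos {g : ℝ → ℝ} {t : ℝ} (hmax : IsLocalMax g t)
    (hg : ContinuousAt g t) : deriv (deriv g) t ≤ 0 := by
  by_contra! hpos
  have hmin : IsLocalMin g t := isLocalMin_of_deriv_deriv_pos hpos hmax.deriv_eq_zero hg
  have hconst : g =ᶠ[𝓝 t] fun _ => g t := by
    filter_upwards [hmin, hmax] with s h₁ h₂ using le_antisymm h₂ h₁
  have hderiv : deriv g =ᶠ[𝓝 t] fun _ => 0 := by
    filter_upwards [hconst.eventuallyEq_nhds] with s hs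
    rw [hs.deriv_eq, deriv_const]
  rw [hderiv.deriv_eq, deriv_const] at hpos
  exact hpos.false

section SecondDerivative

variable {E : Type*} [NormedAddCommGroup E] [NormedSpace ℝ E] {f : E → ℝ} {z v : E}

lemma hasDerivAt_deriv_comp_line {t : ℝ} (hf : ContDiffAt ℝ 2 f (z + t • v)) :
    HasDerivAt (deriv fun s : ℝ => f (z + s • v))
      (fderiv ℝ (fun y => fderiv ℝ f y v) (z + t • v) v) t := by
  have hline (s : ℝ) : HasDerivAt (fun s : ℝ => z + s • v) v s := by
    simpa using ((hasDerivAt_id s).smul_const v).const_add z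
  have hderiv : deriv (fun s => f (z + s • v)) =ᶠ[𝓝 t] fun s => fderiv ℝ f (z + s • v) v := by
    filter_upwards [(hline t).continuousAt.eventually (hf.eventually (by simp))] with s hs
    exact ((hs.differentiableAt (by norm_num)).hasFDerivAt.comp_hasDerivAt s (hline s)).deriv
  have hD : DifferentiableAt ℝ (fun y => fderiv ℝ f y v) (z + t • v) :=
    ((hf.fderiv_right (m := 1) (by norm_num)).differentiableAt one_ne_zero).clm_apply
      (differentiableAt_const v)
  have hcomp := hD.hasFDerivAt.comp_hasDerivAt t (hline t)
  exact hcomp.congr_of_eventuallyEq hderiv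

lemma hasDerivAt_deriv_comp_ray {t : ℝ} (hf : ContDiffAt ℝ 2 f (t • v)) :
    HasDerivAt (deriv fun s : ℝ => f (s • v)) (fderiv ℝ (fun y => fderiv ℝ f y v) (t • v) v) t := by
  simpa using hasDerivAt_deriv_comp_line (z := 0) (v := v) (t := t) (by simpa using hf)

lemma fderiv_fderiv_apply_nonpos_of_isLocalMax (hf : ContDiffAt ℝ 2 f z)
    (hmax : IsLocalMax (fun t : ℝ => f (z + t • v)) 0) :
    fderiv ℝ (fun y => fderiv ℝ f y v) z v ≤ 0 := by
  have h := hasDerivAt_deriv_comp_line (z := z) (v := v) (t := 0) (by simpa using hf)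
  simp only [zero_smul, add_zero] at h
  rw [← h.deriv]
  refine hmax.deriv_deriv_nonpos (ContinuousAt.comp (by simpa using hf.continuousAt) ?_)
  fun_prop

lemma fderiv_fderiv_apply_eq_zero_of_eventuallyEq_const {c : ℝ} (h : f =ᶠ[𝓝 z] fun _ => c)
    (u : E) : fderiv ℝ (fun y => fderiv ℝ f y v) z u = 0 := by
  have hzero : (fun y => fderiv ℝ f y v) =ᶠ[𝓝 z] fun _ => 0 := by
    filter_upwards [h.eventuallyEq_nhds] with y hy
    rw [hy.fderiv_eq, fderiv_const_apply]; rfl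
  rw [hzero.fderiv_eq, fderiv_const_apply]; rfl

lemma ContDiffOn.continuousOn_fderiv_fderiv_apply {s : Set E} (hf : ContDiffOn ℝ 2 f s)
    (hs : IsOpen s) (u : E) : ContinuousOn (fun x => fderiv ℝ (fun y => fderiv ℝ f y v) x u) s := by
  have h1 : ContDiffOn ℝ 1 (fun y => fderiv ℝ f y v) s :=
    (hf.fderiv_of_isOpen hs (by norm_num)).clm_apply contDiffOn_const
  exact (h1.fderiv_of_isOpen hs (m := 0) (by norm_num)).continuousOn.clm_apply continuousOn_const

end SecondDerivative

lemma eq_of_norm_eq_of_radial_antitone {F : Type*} [Norm F] {f : F → ℝ}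
    (hrad : ∀ x y : F, ‖x‖ ≤ ‖y‖ → f y ≤ f x) {x y : F} (h : ‖x‖ = ‖y‖) : f x = f y :=
  le_antisymm (hrad _ _ h.ge) (hrad _ _ h.le)

lemma fderiv_fderiv_apply_nonpos_of_radial_antitone {F : Type*} [NormedAddCommGroup F]
    [InnerProductSpace ℝ F] {f : F → ℝ} {z v : F} (hrad : ∀ x y : F, ‖x‖ ≤ ‖y‖ → f y ≤ f x)
    (hf : ContDiffAt ℝ 2 f z) (hzv : inner ℝ z v = 0) :
    fderiv ℝ (fun y => fderiv ℝ f y v) z v ≤ 0 := by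
  refine fderiv_fderiv_apply_nonpos_of_isLocalMax hf (Eventually.of_forall fun t => ?_)
  refine hrad _ _ ((sq_le_sq₀ (norm_nonneg _) (norm_nonneg _)).1 ?_)
  rw [zero_smul, add_zero, norm_add_sq_real, inner_smul_right, hzv]
  nlinarith [norm_nonneg (t • v)]

section Laplacian

open EuclideanSpace

variable {n : ℕ}

-- Coordinate form of the Laplacian, definitionally the one written in the eigenvalue equation.
noncomputable def coordLaplacian (f : EuclideanSpace ℝ (Fin n) → ℝ)
    (x : EuclideanSpace ℝ (Fin n)) : ℝ :=
  ∑ i, fderiv ℝ (fun y => fderiv ℝ f y (single i 1)) x (single i 1)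

variable {f : EuclideanSpace ℝ (Fin n) → ℝ}

lemma coordLaplacian_eq_zero_of_eventuallyEq_const {x : EuclideanSpace ℝ (Fin n)} {c : ℝ}
    (h : f =ᶠ[𝓝 x] fun _ => c) : coordLaplacian f x = 0 :=
  Finset.sum_eq_zero fun _ _ => fderiv_fderiv_apply_eq_zero_of_eventuallyEq_const h _

lemma ContDiffOn.continuousOn_coordLaplacian {s : Set (EuclideanSpace ℝ (Fin n))}
    (hf : ContDiffOn ℝ 2 f s) (hs : IsOpen s) : ContinuousOn (coordLaplacian f) s :=
  continuousOn_finsetSum _ fun _ _ => hf.continuousOn_fderiv_fderiv_apply hs _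

lemma coordLaplacian_le_deriv_deriv_ray
    (hrad : ∀ x y : EuclideanSpace ℝ (Fin n), ‖x‖ ≤ ‖y‖ → f y ≤ f x) (i : Fin n) {r : ℝ}
    (hf : ContDiffAt ℝ 2 f (r • single i 1)) :
    coordLaplacian f (r • single i 1) ≤ deriv (deriv fun ρ : ℝ => f (ρ • single i 1)) r := by
  have hradial : fderiv ℝ (fun y => fderiv ℝ f y (single i 1)) (r • single i 1) (single i 1) =
      deriv (deriv fun ρ : ℝ => f (ρ • single i 1)) r := by
    exact (hasDerivAt_deriv_comp_ray hf).deriv.symm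
  have htangential : ∀ j ∈ Finset.univ.erase i,
      fderiv ℝ (fun y => fderiv ℝ f y (single j 1)) (r • single i 1) (single j 1) ≤ 0 := by
    intro j hj
    refine fderiv_fderiv_apply_nonpos_of_radial_antitone hrad hf ?_
    simp [inner_smul_left, inner_single_left, Finset.ne_of_mem_erase hj]
  rw [coordLaplacian, ← Finset.add_sum_erase _ _ (Finset.mem_univ i), hradial]
  exact add_le_of_nonpos_right (Finset.sum_nonpos htangential)

lemma convexOn_ray_of_coordLaplacian_nonneg (hcont : Continuous f)
    (hrad : ∀ x y : EuclideanSpace ℝ (Fin n), ‖x‖ ≤ ‖y‖ → f y ≤ f x) (i : Fin n) {a b : ℝ}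
    (hf : ∀ r ∈ Ioo a b, ContDiffAt ℝ 2 f (r • single i 1))
    (hΔ : ∀ r ∈ Ioo a b, 0 ≤ coordLaplacian f (r • single i 1)) :
    ConvexOn ℝ (Icc a b) fun r : ℝ => f (r • single i 1) := by
  refine convexOn_of_deriv2_nonneg (convex_Icc a b) (by fun_prop) ?_ ?_ ?_ <;> rw [interior_Icc]
  · intro r hr
    exact (((hf r hr).differentiableAt (by norm_num)).comp r (by fun_prop)).differentiableWithinAt
  · intro r hr
    exact (hasDerivAt_deriv_comp_ray (hf r hr)).differentiableAt.differentiableWithinAt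
  · intro r hr
    simp only [Function.iterate_succ, Function.iterate_zero, Function.comp_apply, Function.id_def]
    exact (hΔ r hr).trans (coordLaplacian_le_deriv_deriv_ray hrad i (hf r hr))

lemma le_of_coordLaplacian_nonneg_on_shell (hcont : Continuous f)
    (hrad : ∀ x y : EuclideanSpace ℝ (Fin n), ‖x‖ ≤ ‖y‖ → f y ≤ f x)
    {x y z : EuclideanSpace ℝ (Fin n)}
    (hf : ∀ u : EuclideanSpace ℝ (Fin n), ‖u‖ ∈ Ioo ‖x‖ ‖z‖ → ContDiffAt ℝ 2 f u)
    (hΔ : ∀ u : EuclideanSpace ℝ (Fin n), ‖u‖ ∈ Ioo ‖x‖ ‖z‖ → 0 ≤ coordLaplacian f u)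
    (hxy : ‖x‖ < ‖y‖) (hyz : ‖y‖ ≤ ‖z‖) (hfxy : f x ≤ f y) : f y ≤ f z := by
  obtain ⟨i⟩ : Nonempty (Fin n) := by
    by_contra! h
    exact hxy.not_ge (by simp [Subsingleton.elim y 0])
  have hnorm {r : ℝ} (hr : 0 ≤ r) : ‖r • single i (1 : ℝ)‖ = r := by simp [norm_smul, hr]
  have hprofile (u : EuclideanSpace ℝ (Fin n)) : f u = f (‖u‖ • single i 1) :=
    eq_of_norm_eq_of_radial_antitone hrad (hnorm (norm_nonneg u)).symm
  have hray {r : ℝ} (hr : r ∈ Ioo ‖x‖ ‖z‖) : ‖r • single i (1 : ℝ)‖ ∈ Ioo ‖x‖ ‖z‖ := by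
    rwa [hnorm ((norm_nonneg x).trans hr.1.le)]
  have hconv := convexOn_ray_of_coordLaplacian_nonneg hcont hrad i
    (fun r hr => hf _ (hray hr)) (fun r hr => hΔ _ (hray hr))
  rw [hprofile x, hprofile y] at hfxy
  rw [hprofile y, hprofile z]
  exact hconv.le_right_of_left_le'' (left_mem_Icc.2 (hxy.le.trans hyz))
    (right_mem_Icc.2 (hxy.le.trans hyz)) hxy hyz hfxy

end Laplacian

section EigenvalueEquation

variable {n : ℕ} {w V : EuclideanSpace ℝ (Fin n) → ℝ} {lam : ℝ}
  {s U : Set (EuclideanSpace ℝ (Fin n))}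

lemma exists_potential_eq_of_eqOn_const
    (heq : ∀ᵐ z ∂volume.restrict s, -coordLaplacian w z + V z * w z = lam * w z)
    (hU : IsOpen U) (hne : U.Nonempty) (hUs : U ⊆ s) {c : ℝ} (hc : c ≠ 0)
    (hwU : EqOn w (fun _ => c) U) : ∃ z ∈ U, V z = lam := by
  obtain ⟨z, hzU, hz⟩ := exists_mem_of_ae_restrict_of_isOpen heq hU hne hUs
  have hlocal : w =ᶠ[𝓝 z] fun _ => c := eventually_of_mem (hU.mem_nhds hzU) hwU
  rw [coordLaplacian_eq_zero_of_eventuallyEq_const hlocal, hwU hzU] at hz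
  exact ⟨z, hzU, mul_right_cancel₀ hc (by linarith)⟩

lemma coordLaplacian_nonneg_of_le_potential (hw : ContDiffOn ℝ 2 w s) (hs : IsOpen s)
    (heq : ∀ᵐ z ∂volume.restrict s, -coordLaplacian w z + V z * w z = lam * w z)
    (hU : IsOpen U) (hUs : U ⊆ s) (hwU : ∀ z ∈ U, 0 ≤ w z) (hVU : ∀ z ∈ U, lam ≤ V z) :
    ∀ z ∈ U, 0 ≤ coordLaplacian w z := by
  refine ((hw.continuousOn_coordLaplacian hs).mono hUs).nonneg_of_ae_restrict_nonneg
    (μ := volume) hU ?_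
  filter_upwards [ae_restrict_of_ae_restrict_of_subset hUs heq,
    ae_restrict_mem hU.measurableSet] with z hz hzU
  nlinarith [hVU z hzU, hwU z hzU]

end EigenvalueEquation

theorem faber_krahn_stmt12_general (n : ℕ) (R lam : ℝ) (hR : 0 < R)
    (w V : EuclideanSpace ℝ (Fin n) → ℝ)
    (hwcont : Continuous w)
    (hw2 : ∀ x ∈ ball (0 : EuclideanSpace ℝ (Fin n)) R, ContDiffAt ℝ 2 w x)
    (hwzero : ∀ x ∉ ball (0 : EuclideanSpace ℝ (Fin n)) R, w x = 0)
    (hwpos : ∀ x ∈ ball (0 : EuclideanSpace ℝ (Fin n)) R, 0 < w x)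
    (hwrad : ∀ x y : EuclideanSpace ℝ (Fin n), ‖x‖ ≤ ‖y‖ → w y ≤ w x)
    (hVrad : ∀ x y : EuclideanSpace ℝ (Fin n), ‖x‖ ≤ ‖y‖ → V x ≤ V y)
    (heq : ∀ᵐ x ∂(volume.restrict (ball (0 : EuclideanSpace ℝ (Fin n)) R)),
      -(∑ i : Fin n, fderiv ℝ (fun y => fderiv ℝ w y (EuclideanSpace.single i 1)) x
          (EuclideanSpace.single i 1)) + V x * w x = lam * w x) :
    ∀ x ∈ ball (0 : EuclideanSpace ℝ (Fin n)) R,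
      ∀ y ∈ ball (0 : EuclideanSpace ℝ (Fin n)) R, ‖x‖ < ‖y‖ → w y < w x := by
  intro x hx y hy hxy
  by_contra! hle
  change ∀ᵐ z ∂_, -coordLaplacian w z + V z * w z = lam * w z at heq
  have hyR : ‖y‖ < R := mem_ball_zero_iff.1 hy
  have : Nontrivial (EuclideanSpace ℝ (Fin n)) :=
    nontrivial_of_ne y 0 (norm_pos_iff.1 ((norm_nonneg x).trans_lt hxy))
  have hshell (a b : ℝ) : IsOpen (norm ⁻¹' Ioo a b : Set (EuclideanSpace ℝ (Fin n))) :=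
    isOpen_Ioo.preimage continuous_norm
  have hshell_ball {a : ℝ} : norm ⁻¹' Ioo a R ⊆ ball (0 : EuclideanSpace ℝ (Fin n)) R :=
    fun z hz => mem_ball_zero_iff.2 hz.2
  have hconst : EqOn w (fun _ => w x) (norm ⁻¹' Ioo ‖x‖ ‖y‖) := fun z hz =>
    le_antisymm (hwrad x z hz.1.le) (hle.trans (hwrad z y hz.2.le))
  obtain ⟨z₀, hz₀, hVz₀⟩ := exists_potential_eq_of_eqOn_const heq (hshell _ _)
    ((exists_norm_eq _ (by positivity : 0 ≤ (‖x‖ + ‖y‖) / 2)).imp fun z hz => by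
      simp only [mem_preimage, mem_Ioo, hz]; constructor <;> linarith)
    (fun z hz => hshell_ball ⟨hz.1, hz.2.trans hyR⟩) (hwpos x hx).ne' hconst
  have hΔ := coordLaplacian_nonneg_of_le_potential (fun z hz => (hw2 z hz).contDiffWithinAt)
    isOpen_ball heq (hshell ‖z₀‖ R) hshell_ball (fun z hz => (hwpos z (hshell_ball hz)).le)
    fun z hz => hVz₀ ▸ hVrad z₀ z hz.1.le
  obtain ⟨zR, hzR⟩ := exists_norm_eq (EuclideanSpace ℝ (Fin n)) hR.le
  have hmono := le_of_coordLaplacian_nonneg_on_shell hwcont hwrad (z := zR)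
    (fun u hu => hw2 u (hshell_ball (hzR ▸ hu))) (fun u hu => hΔ u (hzR ▸ hu)) hz₀.2
    (hzR ▸ hyR.le) ((hconst hz₀).le.trans hle)
  rw [hwzero zR (by simp [hzR])] at hmono
  exact hmono.not_gt (hwpos y hy)

/-- a positive, radially symmetric and nonincreasing eigenfunction
`w ∈ H¹₀(Ω) ∩ H²(Ω)` (here encoded as continuous on `ℝⁿ`, `C²` in `Ω = B_R(0)`, vanishing
outside `Ω`) of `−Δw + V w = λ w` with `V ≥ 0` radially nondecreasing must be *strictly*
radially decreasing: if it were constant on some annulus, the strong maximum principle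
would force it to be a positive constant up to the boundary, contradicting the zero
boundary values. -/
theorem faber_krahn_stmt12 (n : ℕ) (R lam : ℝ) (hR : 0 < R)
    (w V : EuclideanSpace ℝ (Fin n) → ℝ)
    (hwcont : Continuous w)
    (hw2 : ∀ x ∈ ball (0 : EuclideanSpace ℝ (Fin n)) R, ContDiffAt ℝ 2 w x)
    (hwzero : ∀ x ∉ ball (0 : EuclideanSpace ℝ (Fin n)) R, w x = 0)
    (hwpos : ∀ x ∈ ball (0 : EuclideanSpace ℝ (Fin n)) R, 0 < w x)
    (hwrad : ∀ x y : EuclideanSpace ℝ (Fin n), ‖x‖ ≤ ‖y‖ → w y ≤ w x)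
    (hV0 : ∀ x, 0 ≤ V x)
    (hVrad : ∀ x y : EuclideanSpace ℝ (Fin n), ‖x‖ ≤ ‖y‖ → V x ≤ V y)
    (heq : ∀ᵐ x ∂(volume.restrict (ball (0 : EuclideanSpace ℝ (Fin n)) R)),
      -(∑ i : Fin n, fderiv ℝ (fun y => fderiv ℝ w y (EuclideanSpace.single i 1)) x
          (EuclideanSpace.single i 1)) + V x * w x = lam * w x) :
    ∀ x ∈ ball (0 : EuclideanSpace ℝ (Fin n)) R,
      ∀ y ∈ ball (0 : EuclideanSpace ℝ (Fin n)) R, ‖x‖ < ‖y‖ → w y < w x :=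
  faber_krahn_stmt12_general n R lam hR w V hwcont hw2 hwzero hwpos hwrad hVrad heq
end
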